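/- arXiv:2303.10619 — 2 statements merged into one kernel-verified Lean document; each statement's English description precedes it below -/
import Mathlib

section
/- For every p ∈ Δ(Ω), the limit as n → ∞ of v_n(p) exists and equals v_∞(p). -/
open Filter Topology
open scoped Classical

noncomputable section

/-- Δ(Ω): beliefs, i.e. probability distributions on the finite state space Ω,
as a subspace of Ω → ℝ (its topology agrees with the total-variation one). -/
abbrev Belief (Ω : Type*) [Fintype Ω] :=
  {p : Ω → ℝ // (∀ ω, 0 ≤ p ω) ∧ ∑ ω, p ω = 1}

variable {Ω : Type*} [Fintype Ω]

/-- An element of F₀: a finite-support experiment, i.e. a finitely supported probability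
distribution over beliefs (keys are the distinct posteriors p_j, values the positive
weights λ_j). -/
structure SPExp (Ω : Type*) [Fintype Ω] where
  w : Belief Ω →₀ ℝ
  nonneg : ∀ p, 0 ≤ w p
  sum_one : ∑ p ∈ w.support, w p = 1

namespace SPExp

/-- τ(e): the support of an experiment. -/
def tau (e : SPExp Ω) : Finset (Belief Ω) := e.w.support

/-- Expectation of a real-valued function under an experiment. -/
def expect (e : SPExp Ω) (f : Belief Ω → ℝ) : ℝ := ∑ p ∈ e.w.support, e.w p * f p

/-- σ(e): the barycenter (expectation) of an experiment. -/
def sigma (e : SPExp Ω) : Belief Ω :=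
  ⟨fun ω => ∑ p ∈ e.w.support, e.w p * p.val ω,
   fun ω => Finset.sum_nonneg fun p _ => mul_nonneg (e.nonneg p) (p.2.1 ω),
   by
     calc ∑ ω, ∑ p ∈ e.w.support, e.w p * p.val ω
         = ∑ p ∈ e.w.support, ∑ ω, e.w p * p.val ω := Finset.sum_comm
       _ = ∑ p ∈ e.w.support, e.w p * ∑ ω, p.val ω := by
           refine Finset.sum_congr rfl fun p _ => ?_
           rw [Finset.mul_sum]
       _ = ∑ p ∈ e.w.support, e.w p := by
           refine Finset.sum_congr rfl fun p _ => ?_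
           rw [p.2.2, mul_one]
       _ = 1 := e.sum_one⟩

/-- The trivial experiment (1, p). -/
def triv (p : Belief Ω) : SPExp Ω where
  w := Finsupp.single p 1
  nonneg := fun q => by
    rw [Finsupp.single_apply]
    split <;> norm_num
  sum_one := by
    rw [Finsupp.support_single_ne_zero _ one_ne_zero]
    simp

end SPExp

/-- T: the set of trivial experiments. -/
def Trivials (Ω : Type*) [Fintype Ω] : Set (SPExp Ω) := Set.range SPExp.triv

/-- Weak convergence of experiments, viewed as Borel probability measures on Δ(Ω). -/
def WeakTendsto (es : ℕ → SPExp Ω) (e : SPExp Ω) : Prop :=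
  ∀ f : Belief Ω → ℝ, Continuous f →
    Tendsto (fun i => (es i).expect f) atTop (𝓝 (e.expect f))

/-- Convergence of beliefs in total variation. -/
def TVTendsto (ps : ℕ → Belief Ω) (p : Belief Ω) : Prop :=
  Tendsto (fun i => ∑ ω, |(ps i).val ω - p.val ω|) atTop (𝓝 0)

/-- Histories, most recent step first: entries are (experiment taken, realized posterior);
the starting belief is kept separately. -/
abbrev Hist (Ω : Type*) [Fintype Ω] := List (SPExp Ω × Belief Ω)

/-- last(ξ): the current belief after history ξ started at μ. -/
def lastBelief (μ : Belief Ω) : Hist Ω → Belief Ω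
  | [] => μ
  | (_, p) :: _ => p

/-- Pr[ξ]: the probability of a history. -/
def histProb : Hist Ω → ℝ
  | [] => 1
  | (e, p) :: ξ => e.w p * histProb ξ

/-- A sequential persuasion starting from μ with feasible experiments F, given by its
history-dependent choice of the next (feasible, Bayes-plausible) experiment.  An n-step
sequential persuasion is such a strategy used for n steps; an infinite sequential
persuasion is the strategy itself. -/
structure SeqP {Ω : Type*} [Fintype Ω] (F : Set (SPExp Ω)) (μ : Belief Ω) where
  next : Hist Ω → SPExp Ω
  feasible : ∀ ξ, next ξ ∈ F
  bayes : ∀ ξ, (next ξ).sigma = lastBelief μ ξ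

variable {F : Set (SPExp Ω)} {μ : Belief Ω}

/-- Expectation of g over the n-step histories of S extending ξ. -/
def histExp (S : SeqP F μ) (g : Hist Ω → ℝ) : ℕ → Hist Ω → ℝ
  | 0, ξ => g ξ
  | n + 1, ξ => (S.next ξ).expect fun p => histExp S g n ((S.next ξ, p) :: ξ)

/-- Ξ_n: the set of n-step histories of S. -/
def Hists (S : SeqP F μ) : ℕ → Set (Hist Ω)
  | 0 => {[]}
  | n + 1 => {ξ' | ∃ ξ ∈ Hists S n, ∃ p ∈ (S.next ξ).tau, ξ' = (S.next ξ, p) :: ξ}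

/-- ξ padded by l trivial steps. -/
def padHist (μ : Belief Ω) (ξ : Hist Ω) (l : ℕ) : Hist Ω :=
  List.replicate l (SPExp.triv (lastBelief μ ξ), lastBelief μ ξ) ++ ξ

/-- S terminates after ξ: all subsequent choices (along trivial continuations of ξ)
are the trivial experiment. -/
def TerminatesAfter (S : SeqP F μ) (ξ : Hist Ω) : Prop :=
  ∀ l : ℕ, S.next (padHist μ ξ l) = SPExp.triv (lastBelief μ ξ)

/-- 𝒱(S⁽ⁿ⁾) = E[v(b_n)], the expected utility of the n-step persuasion given by the
first n steps of S. -/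
def stepUtility (v : Belief Ω → ℝ) (S : SeqP F μ) (n : ℕ) : ℝ :=
  histExp S (fun ξ => v (lastBelief μ ξ)) n []

/-- Pr[S terminates after n steps]. -/
def termProb (S : SeqP F μ) (n : ℕ) : ℝ :=
  histExp S (fun ξ => if TerminatesAfter S ξ then 1 else 0) n []

/-- 𝒱(S) for an infinite sequential persuasion S. -/
def infUtility (v : Belief Ω → ℝ) (S : SeqP F μ) : ℝ :=
  ⨆ n : ℕ, histExp S (fun ξ => if TerminatesAfter S ξ then v (lastBelief μ ξ) else 0) n []

/-- Pr[b_n ∈ O] for the belief b_n induced by S after n steps. -/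
def massIn (S : SeqP F μ) (O : Set (Belief Ω)) (n : ℕ) : ℝ :=
  histExp S (fun ξ => if lastBelief μ ξ ∈ O then 1 else 0) n []

/-- v_n(p): the optimal value over n-step sequential persuasions starting from p. -/
def vN (F : Set (SPExp Ω)) (v : Belief Ω → ℝ) (n : ℕ) (p : Belief Ω) : ℝ :=
  ⨆ S : SeqP F p, stepUtility v S n

/-- v_∞(p): the optimal value over infinite sequential persuasions starting from p. -/
def vInf (F : Set (SPExp Ω)) (v : Belief Ω → ℝ) (p : Belief Ω) : ℝ :=
  ⨆ S : SeqP F p, infUtility v S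

/-- Assumption 1: a uniform support bound h, and weak closedness of F. -/
def Assumption1 (F : Set (SPExp Ω)) (h : ℕ) : Prop :=
  (∀ e ∈ F, e.tau.card ≤ h) ∧
  ∀ es : ℕ → SPExp Ω, (∀ i, es i ∈ F) → ∀ e : SPExp Ω, WeakTendsto es e → e ∈ F

/-- Shannon entropy of a belief. -/
def entropy (p : Belief Ω) : ℝ := -∑ ω, p.val ω * Real.log (p.val ω)

/-- Assumption 2: every nontrivial feasible experiment lowers expected entropy by δ. -/
def Assumption2 (F : Set (SPExp Ω)) (δ : ℝ) : Prop :=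
  ∀ e ∈ F \ Trivials Ω, e.expect entropy ≤ entropy e.sigma - δ

/-- S is (effectively) an n-step sequential persuasion: after n steps it only takes
trivial experiments. -/
def IsNStep (S : SeqP F μ) (n : ℕ) : Prop :=
  ∀ ξ : Hist Ω, n ≤ ξ.length → S.next ξ = SPExp.triv (lastBelief μ ξ)

/-- Assumption 3 at prior μ: a sequence of finite-step sequential persuasions whose
values tend to v_∞(μ) and which terminate at a uniform rate. -/
def Assumption3 (F : Set (SPExp Ω)) (v : Belief Ω → ℝ) (μ : Belief Ω) : Prop :=
  ∃ (nk : ℕ → ℕ) (Sk : ℕ → SeqP F μ),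
    (∀ k, IsNStep (Sk k) (nk k)) ∧
    Tendsto (fun k => stepUtility v (Sk k) (nk k)) atTop (𝓝 (vInf F v μ)) ∧
    ∀ ε : ℝ, 0 < ε → ∃ N : ℕ, ∀ k, N ≤ nk k → 1 - ε ≤ termProb (Sk k) N

/-- v̂: the concave closure of v (the value of unconstrained Bayesian persuasion). -/
def concaveClosure (v : Belief Ω → ℝ) (p : Belief Ω) : ℝ :=
  sSup {x : ℝ | ∃ e : SPExp Ω, e.sigma = p ∧ x = e.expect v}

/-- O is implementable for (μ, F). -/
def Implementable (F : Set (SPExp Ω)) (μ : Belief Ω) (O : Set (Belief Ω)) : Prop :=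
  ∀ ε : ℝ, 0 < ε → ∃ (n : ℕ) (S : SeqP F μ), 1 - ε < massIn S O n

/-- S is a Markov sequential persuasion compatible with (μ, D, Z, ρ). -/
def MarkovCompatible (S : SeqP F μ) (D Z : Set (Belief Ω)) (ρ : Belief Ω → SPExp Ω) : Prop :=
  ∀ ξ : Hist Ω,
    (lastBelief μ ξ ∈ D → S.next ξ = ρ (lastBelief μ ξ)) ∧
    (lastBelief μ ξ ∈ Z → S.next ξ = SPExp.triv (lastBelief μ ξ))

/-- The j-th child of vertex m at depth n of the infinite h-ary tree. -/
def treeChild {h n : ℕ} (m : Fin (h ^ n)) (j : Fin h) : Fin (h ^ (n + 1)) :=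
  ⟨m.val * h + j.val, by
    have h1 : m.val + 1 ≤ h ^ n := m.isLt
    have h2 : j.val < h := j.isLt
    calc m.val * h + j.val < m.val * h + h := by omega
      _ = (m.val + 1) * h := by ring
      _ ≤ h ^ n * h := Nat.mul_le_mul h1 le_rfl
      _ = h ^ (n + 1) := (pow_succ h n).symm⟩

/-- An h-branching sequential persuasion starting from μ. -/
structure HBranch (Ω : Type*) [Fintype Ω] (F : Set (SPExp Ω)) (h : ℕ) (μ : Belief Ω) where
  π : ∀ n : ℕ, Fin (h ^ n) → ℝ
  β : ∀ n : ℕ, Fin (h ^ n) → Belief Ω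
  η : ∀ n : ℕ, Fin (h ^ n) → SPExp Ω
  π_nonneg : ∀ n m, 0 ≤ π n m
  π_sum : ∀ n : ℕ, ∑ m, π n m = 1
  η_mem : ∀ n m, η n m ∈ F
  β_root : ∀ m, β 0 m = μ
  compat_sigma : ∀ n m, (η n m).sigma = β n m
  compat_tau : ∀ (n : ℕ) (m : Fin (h ^ n)), ∀ p ∈ (η n m).tau,
    ∃ j : Fin h, β (n + 1) (treeChild m j) = p
  consistent : ∀ (n : ℕ) (m : Fin (h ^ n)) (p : Belief Ω),
    (∑ j : Fin h, if β (n + 1) (treeChild m j) = p then π (n + 1) (treeChild m j) else 0)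
      = π n m * (η n m).w p

/-- c' (at depth n + l) is a descendant of c (at depth n) in the h-ary tree. -/
def Descendant {h : ℕ} : {n : ℕ} → (l : ℕ) → Fin (h ^ n) → Fin (h ^ (n + l)) → Prop
  | _, 0, c, c' => c = c'
  | _, l + 1, c, c' => ∃ c'' j, Descendant l c c'' ∧ c' = treeChild c'' j

namespace HBranch

variable {h : ℕ}

/-- B terminates after vertex m at depth n. -/
def TermAfter (B : HBranch Ω F h μ) (n : ℕ) (m : Fin (h ^ n)) : Prop :=
  B.η n m ∈ Trivials Ω ∧
  ∀ (l : ℕ) (c' : Fin (h ^ (n + l))), Descendant l m c' → 0 < B.π (n + l) c' →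
    B.η (n + l) c' ∈ Trivials Ω

/-- Pr[B terminates after n steps]. -/
def termProb (B : HBranch Ω F h μ) (n : ℕ) : ℝ :=
  ∑ m : Fin (h ^ n), if B.TermAfter n m then B.π n m else 0

end HBranch

/-- B represents the infinite sequential persuasion S (via maps r_n : C_n → Ξ_n). -/
def Represents (S : SeqP F μ) {h : ℕ} (B : HBranch Ω F h μ) : Prop :=
  ∃ r : ∀ n : ℕ, Fin (h ^ n) → Hist Ω,
    ∀ n : ℕ,
      (∀ c, r n c ∈ Hists S n) ∧
      (∀ ξ ∈ Hists S n, histProb ξ = ∑ c, if r n c = ξ then B.π n c else 0) ∧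
      (∀ c, lastBelief μ (r n c) = B.β n c ∧ S.next (r n c) = B.η n c) ∧
      (∀ l : ℕ, ∀ ξ ∈ Hists S n, ∀ ξ' ∈ Hists S (n + l),
        (ξ <:+ ξ' ↔
          ∀ c' : Fin (h ^ (n + l)), r (n + l) c' = ξ' →
            ∃ c : Fin (h ^ n), r n c = ξ ∧ Descendant l c c'))

/-- The number of nontrivial experiments taken along a history. -/
def nontrivCount (ξ : Hist Ω) : ℕ :=
  ξ.countP fun s => decide (s.1 ∉ Trivials Ω)

end

noncomputable section AuxConverge

variable {Ω : Type*} [Fintype Ω]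

lemma aux_expect_triv (p : Belief Ω) (f : Belief Ω → ℝ) : (SPExp.triv p).expect f = f p := by
  unfold SPExp.expect SPExp.triv
  rw [Finsupp.support_single_ne_zero _ one_ne_zero]
  simp

lemma aux_sigma_triv (p : Belief Ω) : (SPExp.triv p).sigma = p := by
  apply Subtype.ext
  funext ω
  show ∑ q ∈ (SPExp.triv p).w.support, (SPExp.triv p).w q * q.val ω = p.val ω
  unfold SPExp.triv
  rw [Finsupp.support_single_ne_zero _ one_ne_zero]
  simp

lemma aux_expect_mono (e : SPExp Ω) {f g : Belief Ω → ℝ} (h : ∀ p, f p ≤ g p) :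
    e.expect f ≤ e.expect g :=
  Finset.sum_le_sum fun p _ => mul_le_mul_of_nonneg_left (h p) (e.nonneg p)

lemma aux_expect_le_const (e : SPExp Ω) {f : Belief Ω → ℝ} {C : ℝ} (hf : ∀ p, f p ≤ C) :
    e.expect f ≤ C := by
  unfold SPExp.expect
  calc ∑ p ∈ e.w.support, e.w p * f p ≤ ∑ p ∈ e.w.support, e.w p * C :=
        Finset.sum_le_sum fun p _ => mul_le_mul_of_nonneg_left (hf p) (e.nonneg p)
    _ = (∑ p ∈ e.w.support, e.w p) * C := by rw [Finset.sum_mul]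
    _ = C := by rw [e.sum_one, one_mul]

variable {F : Set (SPExp Ω)} {μ : Belief Ω}

lemma aux_histExp_congr_next (S S' : SeqP F μ) (g : Hist Ω → ℝ) :
    ∀ (n : ℕ) (ξ : Hist Ω),
      (∀ ξ' : Hist Ω, ξ.length ≤ ξ'.length → ξ'.length < ξ.length + n →
        S.next ξ' = S'.next ξ') →
      histExp S g n ξ = histExp S' g n ξ
  | 0, ξ, _ => rfl
  | n + 1, ξ, h => by
    have he : S.next ξ = S'.next ξ := h ξ le_rfl (by omega)
    show (S.next ξ).expect _ = (S'.next ξ).expect _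
    rw [← he]
    unfold SPExp.expect
    refine Finset.sum_congr rfl fun p _ => ?_
    congr 1
    refine aux_histExp_congr_next S S' g n ((S.next ξ, p) :: ξ) ?_
    intro ξ' h1 h2
    simp only [List.length_cons] at h1 h2
    exact h ξ' (by omega) (by omega)

lemma aux_histExp_congr_g (S : SeqP F μ) (g g' : Hist Ω → ℝ) :
    ∀ (n : ℕ) (ξ : Hist Ω),
      (∀ ξ' : Hist Ω, ξ'.length = ξ.length + n → g ξ' = g' ξ') →
      histExp S g n ξ = histExp S g' n ξ
  | 0, ξ, h => h ξ (by omega)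
  | n + 1, ξ, h => by
    show (S.next ξ).expect _ = (S.next ξ).expect _
    unfold SPExp.expect
    refine Finset.sum_congr rfl fun p _ => ?_
    congr 1
    refine aux_histExp_congr_g S g g' n ((S.next ξ, p) :: ξ) ?_
    intro ξ' h1
    simp only [List.length_cons] at h1
    exact h ξ' (by omega)

lemma aux_histExp_succ (S : SeqP F μ) (g : Hist Ω → ℝ) :
    ∀ (n : ℕ) (ξ : Hist Ω),
      histExp S g (n + 1) ξ =
        histExp S (fun ξ' => (S.next ξ').expect fun p => g ((S.next ξ', p) :: ξ')) n ξ
  | 0, ξ => rfl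
  | n + 1, ξ => by
    show (S.next ξ).expect _ = (S.next ξ).expect _
    unfold SPExp.expect
    refine Finset.sum_congr rfl fun p _ => ?_
    congr 1
    exact aux_histExp_succ S g n ((S.next ξ, p) :: ξ)

lemma aux_histExp_mono (S : SeqP F μ) {g g' : Hist Ω → ℝ} (h : ∀ ξ, g ξ ≤ g' ξ) :
    ∀ (n : ℕ) (ξ : Hist Ω), histExp S g n ξ ≤ histExp S g' n ξ
  | 0, ξ => h ξ
  | n + 1, ξ => aux_expect_mono _ fun p => aux_histExp_mono S h n ((S.next ξ, p) :: ξ)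

lemma aux_histExp_le_const (S : SeqP F μ) {g : Hist Ω → ℝ} {C : ℝ} (h : ∀ ξ, g ξ ≤ C) :
    ∀ (n : ℕ) (ξ : Hist Ω), histExp S g n ξ ≤ C
  | 0, ξ => h ξ
  | n + 1, ξ =>
    aux_expect_le_const _ fun p => aux_histExp_le_const S h n ((S.next ξ, p) :: ξ)

/-- The all-trivial sequential persuasion. -/
def trivSeqP (hTF : Trivials Ω ⊆ F) (μ : Belief Ω) : SeqP F μ where
  next ξ := SPExp.triv (lastBelief μ ξ)
  feasible ξ := hTF ⟨_, rfl⟩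
  bayes ξ := aux_sigma_triv _

/-- Truncation of S after n steps. -/
def truncSeqP (S : SeqP F μ) (hTF : Trivials Ω ⊆ F) (n : ℕ) : SeqP F μ where
  next ξ := if ξ.length < n then S.next ξ else SPExp.triv (lastBelief μ ξ)
  feasible ξ := by
    split
    · exact S.feasible ξ
    · exact hTF ⟨_, rfl⟩
  bayes ξ := by
    split
    · exact S.bayes ξ
    · exact aux_sigma_triv _

lemma aux_lastBelief_pad (μ : Belief Ω) (ξ : Hist Ω) (l : ℕ) :
    lastBelief μ (padHist μ ξ l) = lastBelief μ ξ := by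
  cases l with
  | zero => rfl
  | succ l => rfl

lemma aux_length_pad (μ : Belief Ω) (ξ : Hist Ω) (l : ℕ) :
    (padHist μ ξ l).length = l + ξ.length := by
  simp [padHist]

lemma aux_trunc_term (S : SeqP F μ) (hTF : Trivials Ω ⊆ F) (n : ℕ) (ξ : Hist Ω)
    (hlen : n ≤ ξ.length) : TerminatesAfter (truncSeqP S hTF n) ξ := by
  intro l
  show (if (padHist μ ξ l).length < n then _ else _) = _
  rw [if_neg (by rw [aux_length_pad]; omega), aux_lastBelief_pad]

lemma aux_trunc_stepUtility (v : Belief Ω → ℝ) (S : SeqP F μ) (hTF : Trivials Ω ⊆ F) (n : ℕ) :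
    stepUtility v (truncSeqP S hTF n) n = stepUtility v S n := by
  refine aux_histExp_congr_next _ _ _ n [] fun ξ' _ h2 => ?_
  show (if ξ'.length < n then _ else _) = _
  rw [if_pos (by simpa using h2)]

lemma aux_trunc_stepUtility_succ (v : Belief Ω → ℝ) (S : SeqP F μ) (hTF : Trivials Ω ⊆ F)
    (n : ℕ) :
    stepUtility v (truncSeqP S hTF n) (n + 1) = stepUtility v (truncSeqP S hTF n) n := by
  unfold stepUtility
  rw [aux_histExp_succ]
  refine aux_histExp_congr_g _ _ _ n [] fun ξ' h1 => ?_
  have hnext : (truncSeqP S hTF n).next ξ' = SPExp.triv (lastBelief μ ξ') := by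
    show (if ξ'.length < n then _ else _) = _
    rw [if_neg (by omega)]
  rw [hnext, aux_expect_triv]
  rfl

end AuxConverge

/-- Lemma 3 (lem-converge): (v_n) converges pointwise to v_∞. -/
theorem lem_converge {Ω : Type*} [Fintype Ω] [Nonempty Ω]
    (F : Set (SPExp Ω)) (hTF : Trivials Ω ⊆ F)
    (v : Belief Ω → ℝ) (Vlo Vhi : ℝ) (hVlo : 0 < Vlo) (hVV : Vlo ≤ Vhi)
    (hvlo : ∀ p, Vlo ≤ v p) (hvhi : ∀ p, v p ≤ Vhi)
    (husc : UpperSemicontinuous v) :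
    ∀ p : Belief Ω,
      Filter.Tendsto (fun n => vN F v n p) Filter.atTop (nhds (vInf F v p)) := by
  intro p
  have hne : Nonempty (SeqP F p) := ⟨trivSeqP hTF p⟩
  have hVhi0 : (0 : ℝ) ≤ Vhi := le_of_lt (lt_of_lt_of_le hVlo hVV)
  -- stepUtility bounded above
  have hstep_le : ∀ (S : SeqP F p) (n : ℕ), stepUtility v S n ≤ Vhi := fun S n =>
    aux_histExp_le_const S (fun ξ => hvhi _) n []
  have hbddStep : ∀ n : ℕ, BddAbove (Set.range fun S : SeqP F p => stepUtility v S n) :=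
    fun n => ⟨Vhi, by rintro x ⟨S, rfl⟩; exact hstep_le S n⟩
  have hvN_le : ∀ n : ℕ, vN F v n p ≤ Vhi := fun n => ciSup_le fun S => hstep_le S n
  have hbddvN : BddAbove (Set.range fun n => vN F v n p) :=
    ⟨Vhi, by rintro x ⟨n, rfl⟩; exact hvN_le n⟩
  -- termination-value function bounded
  have hterm_le : ∀ (S : SeqP F p) (ξ : Hist Ω),
      (if TerminatesAfter S ξ then v (lastBelief p ξ) else 0) ≤ Vhi := by
    intro S ξ; split
    · exact hvhi _
    · exact hVhi0
  have hbddInf : ∀ S : SeqP F p, BddAbove (Set.range fun n =>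
      histExp S (fun ξ => if TerminatesAfter S ξ then v (lastBelief p ξ) else 0) n []) :=
    fun S => ⟨Vhi, by rintro x ⟨n, rfl⟩; exact aux_histExp_le_const S (hterm_le S) n []⟩
  have hInf_le : ∀ S : SeqP F p, infUtility v S ≤ Vhi := fun S =>
    ciSup_le fun n => aux_histExp_le_const S (hterm_le S) n []
  have hbddvInf : BddAbove (Set.range fun S : SeqP F p => infUtility v S) :=
    ⟨Vhi, by rintro x ⟨S, rfl⟩; exact hInf_le S⟩
  -- each n-step value is attainable by an infinite persuasion
  have hstep_le_vInf : ∀ (S : SeqP F p) (n : ℕ), stepUtility v S n ≤ vInf F v p := by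
    intro S n
    set S' := truncSeqP S hTF n with hS'
    have h1 : histExp S' (fun ξ => if TerminatesAfter S' ξ then v (lastBelief p ξ) else 0) n []
        = stepUtility v S' n := by
      refine aux_histExp_congr_g S' _ _ n [] fun ξ' h1 => ?_
      rw [if_pos (aux_trunc_term S hTF n ξ' (by omega))]
    have h2 : stepUtility v S n ≤ infUtility v S' := by
      rw [← aux_trunc_stepUtility v S hTF n, ← h1]
      exact le_ciSup (hbddInf S') n
    exact le_trans h2 (le_ciSup hbddvInf S')
  -- vN is monotone
  have hmono : Monotone fun n => vN F v n p := by
    refine monotone_nat_of_le_succ fun n => ?_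
    refine ciSup_le fun S => ?_
    calc stepUtility v S n = stepUtility v (truncSeqP S hTF n) (n + 1) := by
          rw [aux_trunc_stepUtility_succ, aux_trunc_stepUtility]
      _ ≤ vN F v (n + 1) p := le_ciSup (hbddStep (n + 1)) _
  -- sup of vN equals vInf
  have hsup : (⨆ n, vN F v n p) = vInf F v p := by
    apply le_antisymm
    · exact ciSup_le fun n => ciSup_le fun S => hstep_le_vInf S n
    · refine ciSup_le fun S => ?_
      refine ciSup_le fun n => ?_
      have h1 : histExp S (fun ξ => if TerminatesAfter S ξ then v (lastBelief p ξ) else 0) n []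
          ≤ stepUtility v S n := by
        refine aux_histExp_mono S (fun ξ => ?_) n []
        split
        · exact le_rfl
        · exact le_trans (le_of_lt hVlo) (hvlo _)
      calc histExp S (fun ξ => if TerminatesAfter S ξ then v (lastBelief p ξ) else 0) n []
          ≤ stepUtility v S n := h1
        _ ≤ vN F v n p := le_ciSup (hbddStep n) S
        _ ≤ ⨆ n, vN F v n p := le_ciSup hbddvN n
  rw [← hsup]
  exact tendsto_atTop_ciSup hmono hbddvN
end

section
/- For any n ∈ ℕ and p ∈ Δ(Ω), v_n(p) = v_∞(p) if and only if there exists a function g: Δ(Ω) → ℝ such that g ≥ v pointwise, g(σ(e)) ≥ Σ_{j∈[m]} λ_j g(p_j) for every experiment e = (λ_j, p_j)_{j∈[m]} ∈ F, and g(p) = v_n(p). -/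
open Filter Topology
open scoped Classical

/-!
`v_∞` is the least element of the class `G` of functions `g ≥ v` with `E_e g ≤ g (σ e)` for
all `e ∈ F`. It lies in `G`: stopping at once shows `v ≤ v_∞`, and running `e` first and then
a nearly optimal persuasion from each posterior (with one horizon for the finitely many
posteriors) shows `E_e v_∞ ≤ v_∞ (σ e)`. It is below every `g ∈ G`: along any persuasion
`g (b_n)` is a supermartingale dominating the realized terminal payoff. Together with
`v_n ≤ v_∞` (cut a persuasion after `n` steps), this pins `v_∞ p` between `v_n p` and `g p`
for every `g ∈ G`.
-/

noncomputable section

variable {Ω : Type*} [Fintype Ω] {F : Set (SPExp Ω)} {μ : Belief Ω}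

namespace SPExp

lemma expect_mono {e : SPExp Ω} {f f' : Belief Ω → ℝ}
    (h : ∀ p ∈ e.w.support, f p ≤ f' p) : e.expect f ≤ e.expect f' :=
  Finset.sum_le_sum fun p hp => mul_le_mul_of_nonneg_left (h p hp) (e.nonneg p)

lemma expect_const (e : SPExp Ω) (c : ℝ) : e.expect (fun _ => c) = c := by
  rw [expect, ← Finset.sum_mul, e.sum_one, one_mul]

lemma expect_sub_const (e : SPExp Ω) (f : Belief Ω → ℝ) (c : ℝ) :
    e.expect (fun p => f p - c) = e.expect f - c := by
  simp only [expect, mul_sub, Finset.sum_sub_distrib, ← Finset.sum_mul, e.sum_one, one_mul]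

lemma expect_triv (p : Belief Ω) (f : Belief Ω → ℝ) : (triv p).expect f = f p := by
  simp [expect, triv]

lemma sigma_triv (p : Belief Ω) : (triv p).sigma = p := by
  ext ω
  simp [sigma, triv]

lemma triv_mem_trivials (p : Belief Ω) : triv p ∈ Trivials Ω := ⟨p, rfl⟩

end SPExp

open SPExp

def Superharmonic (F : Set (SPExp Ω)) (g : Belief Ω → ℝ) : Prop :=
  ∀ e ∈ F, e.expect g ≤ g e.sigma

lemma lastBelief_padHist (ξ : Hist Ω) (l : ℕ) :
    lastBelief μ (padHist μ ξ l) = lastBelief μ ξ := by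
  cases l <;> simp [padHist, List.replicate_succ, lastBelief]

lemma lastBelief_append_singleton (ζ : Hist Ω) (s : SPExp Ω × Belief Ω) :
    lastBelief μ (ζ ++ [s]) = lastBelief s.2 ζ := by
  cases ζ <;> rfl

lemma padHist_append_singleton (ζ : Hist Ω) (s : SPExp Ω × Belief Ω) (l : ℕ) :
    padHist μ (ζ ++ [s]) l = padHist s.2 ζ l ++ [s] := by
  simp [padHist, lastBelief_append_singleton]

lemma padHist_cons_triv (ξ : Hist Ω) (l : ℕ) :
    padHist μ ((triv (lastBelief μ ξ), lastBelief μ ξ) :: ξ) l = padHist μ ξ (l + 1) := by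
  simp [padHist, lastBelief, List.replicate_succ']

section histExp

variable {S : SeqP F μ}

lemma histExp_mono {g g' : Hist Ω → ℝ} (h : ∀ ζ, g ζ ≤ g' ζ) :
    ∀ (n : ℕ) (ξ : Hist Ω), histExp S g n ξ ≤ histExp S g' n ξ
  | 0, ξ => h ξ
  | n + 1, _ => expect_mono fun _ _ => histExp_mono h n _

lemma histExp_const (c : ℝ) : ∀ (n : ℕ) (ξ : Hist Ω), histExp S (fun _ => c) n ξ = c
  | 0, _ => rfl
  | n + 1, ξ => by
    simp only [histExp, histExp_const c n, expect_const]

lemma histExp_le_of_le {g : Hist Ω → ℝ} {c : ℝ} (h : ∀ ζ, g ζ ≤ c) (n : ℕ) (ξ : Hist Ω) :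
    histExp S g n ξ ≤ c :=
  (histExp_mono h n ξ).trans_eq (histExp_const c n ξ)

lemma histExp_congr_of_length {g g' : Hist Ω → ℝ} :
    ∀ (n : ℕ) (ξ : Hist Ω), (∀ ζ : Hist Ω, ζ.length = n + ξ.length → g ζ = g' ζ) →
      histExp S g n ξ = histExp S g' n ξ
  | 0, ξ, h => h ξ (zero_add _).symm
  | n + 1, ξ, h => by
    simp only [histExp]
    congr 1
    funext p
    exact histExp_congr_of_length n _ fun ζ hζ => h ζ (by simp at hζ ⊢; omega)

lemma histExp_congr_next {S' : SeqP F μ} {g : Hist Ω → ℝ} :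
    ∀ (n : ℕ) (ξ : Hist Ω),
      (∀ ζ : Hist Ω, ξ.length ≤ ζ.length → ζ.length < ξ.length + n → S.next ζ = S'.next ζ) →
      histExp S g n ξ = histExp S' g n ξ
  | 0, _, _ => rfl
  | n + 1, ξ, h => by
    simp only [histExp, h ξ le_rfl (by omega)]
    congr 1
    funext p
    exact histExp_congr_next n _ fun ζ h₁ h₂ =>
      h ζ (by simp at h₁ ⊢; omega) (by simp at h₂ ⊢; omega)

lemma histExp_succ' (g : Hist Ω → ℝ) : ∀ (n : ℕ) (ξ : Hist Ω),
    histExp S g (n + 1) ξ =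
      histExp S (fun ζ => (S.next ζ).expect fun p => g ((S.next ζ, p) :: ζ)) n ξ
  | 0, _ => rfl
  | n + 1, ξ => by
    simp only [histExp]
    congr 1
    funext p
    exact histExp_succ' g n _

lemma histExp_le_of_superharmonic {g : Belief Ω → ℝ} (hg : Superharmonic F g) :
    ∀ (n : ℕ) (ξ : Hist Ω), histExp S (fun ζ => g (lastBelief μ ζ)) n ξ ≤ g (lastBelief μ ξ)
  | 0, _ => le_rfl
  | n + 1, ξ => calc
      (S.next ξ).expect
          (fun p => histExp S (fun ζ => g (lastBelief μ ζ)) n ((S.next ξ, p) :: ξ))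
        ≤ (S.next ξ).expect g := expect_mono fun _ _ => histExp_le_of_superharmonic hg n _
      _ ≤ g (S.next ξ).sigma := hg _ (S.feasible ξ)
      _ = g (lastBelief μ ξ) := by rw [S.bayes ξ]

end histExp

lemma TerminatesAfter.next_eq {S : SeqP F μ} {ξ : Hist Ω} (h : TerminatesAfter S ξ) :
    S.next ξ = triv (lastBelief μ ξ) := by
  simpa [padHist] using h 0

lemma TerminatesAfter.cons_triv {S : SeqP F μ} {ξ : Hist Ω} (h : TerminatesAfter S ξ) :
    TerminatesAfter S ((triv (lastBelief μ ξ), lastBelief μ ξ) :: ξ) := fun l => by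
  rw [padHist_cons_triv]
  exact h (l + 1)

def terminalPayoff (v : Belief Ω → ℝ) (S : SeqP F μ) (ξ : Hist Ω) : ℝ :=
  if TerminatesAfter S ξ then v (lastBelief μ ξ) else 0

section terminalPayoff

variable {v : Belief Ω → ℝ} {C : ℝ}

lemma terminalPayoff_le_expect_next (hv0 : ∀ p, 0 ≤ v p) (S : SeqP F μ) (ξ : Hist Ω) :
    terminalPayoff v S ξ ≤
      (S.next ξ).expect fun p => terminalPayoff v S ((S.next ξ, p) :: ξ) := by
  by_cases h : TerminatesAfter S ξ
  · rw [h.next_eq, expect_triv, terminalPayoff, terminalPayoff, if_pos h, if_pos h.cons_triv]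
    rfl
  · rw [terminalPayoff, if_neg h, ← expect_const (S.next ξ) 0]
    refine expect_mono fun p _ => ?_
    unfold terminalPayoff
    split_ifs
    exacts [hv0 _, le_rfl]

lemma monotone_histExp_terminalPayoff (hv0 : ∀ p, 0 ≤ v p) (S : SeqP F μ) :
    Monotone fun n => histExp S (terminalPayoff v S) n [] :=
  monotone_nat_of_le_succ fun n => by
    rw [histExp_succ']
    exact histExp_mono (terminalPayoff_le_expect_next hv0 S) n []

lemma histExp_terminalPayoff_le (hv0 : ∀ p, 0 ≤ v p) (hvC : ∀ p, v p ≤ C) (S : SeqP F μ)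
    (n : ℕ) : histExp S (terminalPayoff v S) n [] ≤ C := by
  refine histExp_le_of_le (fun ξ => ?_) n []
  unfold terminalPayoff
  split_ifs
  exacts [hvC _, (hv0 μ).trans (hvC μ)]

lemma histExp_terminalPayoff_le_vInf (hv0 : ∀ p, 0 ≤ v p) (hvC : ∀ p, v p ≤ C)
    (S : SeqP F μ) (n : ℕ) : histExp S (terminalPayoff v S) n [] ≤ vInf F v μ := by
  have hS : BddAbove (Set.range fun n => histExp S (terminalPayoff v S) n []) :=
    ⟨C, Set.forall_mem_range.2 (histExp_terminalPayoff_le hv0 hvC S)⟩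
  have hSup : BddAbove (Set.range fun S : SeqP F μ => infUtility v S) :=
    ⟨C, Set.forall_mem_range.2 fun S =>
      ciSup_le fun n => histExp_terminalPayoff_le hv0 hvC S n⟩
  exact (le_ciSup hS n).trans (le_ciSup hSup S)

end terminalPayoff

namespace SeqP

def trivial (hTF : Trivials Ω ⊆ F) (μ : Belief Ω) : SeqP F μ where
  next ξ := triv (lastBelief μ ξ)
  feasible _ := hTF (triv_mem_trivials _)
  bayes _ := sigma_triv _

lemma trivial_terminatesAfter (hTF : Trivials Ω ⊆ F) (ξ : Hist Ω) :
    TerminatesAfter (trivial hTF μ) ξ := fun l => by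
  simp only [trivial, lastBelief_padHist]

def cutoff (hTF : Trivials Ω ⊆ F) (S : SeqP F μ) (n : ℕ) : SeqP F μ where
  next ξ := if ξ.length < n then S.next ξ else triv (lastBelief μ ξ)
  feasible ξ := by
    split_ifs
    exacts [S.feasible ξ, hTF (triv_mem_trivials _)]
  bayes ξ := by
    split_ifs
    exacts [S.bayes ξ, sigma_triv _]

lemma cutoff_terminatesAfter (hTF : Trivials Ω ⊆ F) (S : SeqP F μ) {n : ℕ} {ξ : Hist Ω}
    (h : n ≤ ξ.length) : TerminatesAfter (cutoff hTF S n) ξ := fun l => by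
  simp only [cutoff, lastBelief_padHist]
  rw [if_neg (by simp [padHist]; omega)]

/-- Runs `e`, then `T p` from the realized posterior `p`. Histories list the most recent step
first, so the step of `e` is the last entry. -/
def bind (e : SPExp Ω) (he : e ∈ F) (T : ∀ p : Belief Ω, SeqP F p) : SeqP F e.sigma where
  next ξ := ξ.getLast?.elim e fun s => (T s.2).next ξ.dropLast
  feasible ξ := by
    rcases ξ.eq_nil_or_concat with rfl | ⟨ζ, s, rfl⟩
    · exact he
    · simpa using (T s.2).feasible ζ
  bayes ξ := by
    rcases ξ.eq_nil_or_concat with rfl | ⟨ζ, s, rfl⟩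
    · rfl
    · simpa [lastBelief_append_singleton] using (T s.2).bayes ζ

variable {e : SPExp Ω} {he : e ∈ F} {T : ∀ p : Belief Ω, SeqP F p}

lemma bind_next_append_singleton (ζ : Hist Ω) (s : SPExp Ω × Belief Ω) :
    (bind e he T).next (ζ ++ [s]) = (T s.2).next ζ := by
  simp [bind]

lemma bind_terminatesAfter_iff (ζ : Hist Ω) (s : SPExp Ω × Belief Ω) :
    TerminatesAfter (bind e he T) (ζ ++ [s]) ↔ TerminatesAfter (T s.2) ζ := by
  simp only [TerminatesAfter, padHist_append_singleton, bind_next_append_singleton,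
    lastBelief_append_singleton]

lemma histExp_bind (g : Hist Ω → ℝ) : ∀ (n : ℕ) (ζ : Hist Ω) (s : SPExp Ω × Belief Ω),
    histExp (bind e he T) g n (ζ ++ [s]) = histExp (T s.2) (fun ζ' => g (ζ' ++ [s])) n ζ
  | 0, _, _ => rfl
  | n + 1, ζ, s => by
    simp only [histExp, bind_next_append_singleton]
    congr 1
    funext p
    exact histExp_bind g n ((_, p) :: ζ) s

lemma histExp_bind_terminalPayoff (v : Belief Ω → ℝ) (n : ℕ) :
    histExp (bind e he T) (terminalPayoff v (bind e he T)) (n + 1) [] =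
      e.expect fun p => histExp (T p) (terminalPayoff v (T p)) n [] := by
  refine congrArg e.expect (funext fun p => ?_)
  refine (histExp_bind _ n [] (e, p)).trans (congrArg (histExp (T p) · n []) (funext fun ζ => ?_))
  simp only [terminalPayoff, bind_terminatesAfter_iff, lastBelief_append_singleton]

end SeqP

section value

variable {v : Belief Ω → ℝ} {C : ℝ}

lemma le_vInf (hTF : Trivials Ω ⊆ F) (hv0 : ∀ p, 0 ≤ v p) (hvC : ∀ p, v p ≤ C)
    (p : Belief Ω) : v p ≤ vInf F v p := by
  have h := histExp_terminalPayoff_le_vInf hv0 hvC (SeqP.trivial hTF p) 0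
  rwa [histExp, terminalPayoff, if_pos (SeqP.trivial_terminatesAfter hTF [])] at h

lemma exists_lt_histExp_terminalPayoff (hTF : Trivials Ω ⊆ F) (p : Belief Ω) {ε : ℝ}
    (hε : 0 < ε) : ∃ (S : SeqP F p) (N : ℕ),
      vInf F v p - ε < histExp S (terminalPayoff v S) N [] := by
  have : Nonempty (SeqP F p) := ⟨SeqP.trivial hTF p⟩
  obtain ⟨S, hS⟩ := exists_lt_of_lt_ciSup (sub_lt_self (vInf F v p) hε)
  exact ⟨S, exists_lt_of_lt_ciSup hS⟩

lemma vInf_superharmonic (hTF : Trivials Ω ⊆ F) (hv0 : ∀ p, 0 ≤ v p) (hvC : ∀ p, v p ≤ C) :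
    Superharmonic F (vInf F v) := by
  intro e he
  refine le_of_forall_pos_le_add fun ε hε => ?_
  choose T Nf hT using fun p => exists_lt_histExp_terminalPayoff (v := v) hTF p hε
  set N := e.w.support.sup Nf
  have hN : ∀ p ∈ e.w.support,
      vInf F v p - ε ≤ histExp (T p) (terminalPayoff v (T p)) N [] := fun p hp =>
    (hT p).le.trans (monotone_histExp_terminalPayoff hv0 (T p) (Finset.le_sup hp))
  calc e.expect (vInf F v)
      = e.expect (fun p => vInf F v p - ε) + ε := by rw [expect_sub_const, sub_add_cancel]
    _ ≤ e.expect (fun p => histExp (T p) (terminalPayoff v (T p)) N []) + ε := by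
      gcongr
      exact expect_mono hN
    _ = histExp (SeqP.bind e he T) (terminalPayoff v (SeqP.bind e he T)) (N + 1) [] + ε := by
      rw [SeqP.histExp_bind_terminalPayoff]
    _ ≤ vInf F v e.sigma + ε := by
      gcongr
      exact histExp_terminalPayoff_le_vInf hv0 hvC _ _

lemma vInf_le_of_superharmonic (hTF : Trivials Ω ⊆ F) (hv0 : ∀ p, 0 ≤ v p)
    {g : Belief Ω → ℝ} (hgv : ∀ p, v p ≤ g p) (hg : Superharmonic F g) (p : Belief Ω) :
    vInf F v p ≤ g p := by
  have : Nonempty (SeqP F p) := ⟨SeqP.trivial hTF p⟩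
  refine ciSup_le fun S => ciSup_le fun n => ?_
  calc histExp S (terminalPayoff v S) n []
      ≤ histExp S (fun ζ => g (lastBelief p ζ)) n [] := by
        refine histExp_mono (fun ζ => ?_) n []
        unfold terminalPayoff
        split_ifs
        exacts [hgv _, (hv0 _).trans (hgv _)]
    _ ≤ g p := histExp_le_of_superharmonic hg n []

lemma vN_le_vInf (hTF : Trivials Ω ⊆ F) (hv0 : ∀ p, 0 ≤ v p) (hvC : ∀ p, v p ≤ C)
    (n : ℕ) (p : Belief Ω) : vN F v n p ≤ vInf F v p := by
  have : Nonempty (SeqP F p) := ⟨SeqP.trivial hTF p⟩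
  refine ciSup_le fun S => ?_
  set S' := SeqP.cutoff hTF S n
  have hS' : stepUtility v S n = histExp S' (terminalPayoff v S') n [] := by
    refine (histExp_congr_next n [] fun ζ _ hζ => ?_).trans
      (histExp_congr_of_length n [] fun ζ hζ => ?_)
    · simp only [S', SeqP.cutoff, if_pos (show ζ.length < n by simpa using hζ)]
    · rw [terminalPayoff, if_pos (SeqP.cutoff_terminatesAfter hTF S (by simp [hζ]))]
  exact hS'.trans_le (histExp_terminalPayoff_le_vInf hv0 hvC S' n)

end value

end

theorem coro_finite_steps_general {Ω : Type*} [Fintype Ω]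
    (F : Set (SPExp Ω)) (hTF : Trivials Ω ⊆ F)
    (v : Belief Ω → ℝ) (Vlo Vhi : ℝ) (hVlo : 0 < Vlo)
    (hvlo : ∀ p, Vlo ≤ v p) (hvhi : ∀ p, v p ≤ Vhi) :
    ∀ (n : ℕ) (p : Belief Ω),
      vN F v n p = vInf F v p ↔
        ∃ g : Belief Ω → ℝ,
          (∀ q, v q ≤ g q) ∧
          (∀ e ∈ F, SPExp.expect e g ≤ g (SPExp.sigma e)) ∧
          g p = vN F v n p := by
  intro n p
  have hv0 : ∀ q, 0 ≤ v q := fun q => hVlo.le.trans (hvlo q)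
  constructor
  · intro h
    exact ⟨vInf F v, le_vInf hTF hv0 hvhi, vInf_superharmonic hTF hv0 hvhi, h.symm⟩
  · rintro ⟨g, hgv, hg, hgp⟩
    exact (vN_le_vInf hTF hv0 hvhi n p).antisymm
      ((vInf_le_of_superharmonic hTF hv0 hgv hg p).trans_eq hgp)

/-- Corollary: finitely many steps suffice at p iff some g ∈ G certifies it. -/
theorem coro_finite_steps {Ω : Type*} [Fintype Ω] [Nonempty Ω]
    (F : Set (SPExp Ω)) (hTF : Trivials Ω ⊆ F)
    (v : Belief Ω → ℝ) (Vlo Vhi : ℝ) (hVlo : 0 < Vlo) (hVV : Vlo ≤ Vhi)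
    (hvlo : ∀ p, Vlo ≤ v p) (hvhi : ∀ p, v p ≤ Vhi)
    (husc : UpperSemicontinuous v) :
    ∀ (n : ℕ) (p : Belief Ω),
      vN F v n p = vInf F v p ↔
        ∃ g : Belief Ω → ℝ,
          (∀ q, v q ≤ g q) ∧
          (∀ e ∈ F, SPExp.expect e g ≤ g (SPExp.sigma e)) ∧
          g p = vN F v n p :=
  coro_finite_steps_general F hTF v Vlo Vhi hVlo hvlo hvhi
end
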